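/- There exists a constant c > 0 (independent of n and of the coefficients) such that for every n ≥ 1 and all real numbers α₁, …, α_n, (1/n) ∫_{G_m} | Σ_{k=1}^{n} α_k D_k(x) | dμ(x) ≤ (c/√n) ( Σ_{k=1}^{n} α_k² )^{1/2}. -/

import Mathlib

open MeasureTheory Filter Finset
open scoped ENNReal NNReal Real

noncomputable section

namespace Vilenkin

/-- The bounded Vilenkin group: complete direct product of the cyclic groups `ZMod (m k)`. -/
abbrev G (m : ℕ → ℕ) : Type := ∀ k, ZMod (m k)

/-- The generalized number system `M 0 = 1`, `M (k+1) = m k * M k`. -/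
def M (m : ℕ → ℕ) : ℕ → ℕ
  | 0 => 1
  | k + 1 => m k * M m k

/-- The cylinder neighbourhood `I n = {x | x 0 = ⋯ = x (n-1) = 0}`. -/
def I (m : ℕ → ℕ) (n : ℕ) : Set (G m) := {x | ∀ j < n, x j = 0}

/-- The `j`-th digit of `n` in the generalized number system based on `m`. -/
def digit (m : ℕ → ℕ) (n j : ℕ) : ℕ := n / M m j % m j

/-- The generalized Rademacher functions `r k x = exp (2 π i x_k / m_k)`. -/
def rad (m : ℕ → ℕ) (k : ℕ) (x : G m) : ℂ :=
  Complex.exp (2 * Real.pi * Complex.I * ((x k).val : ℂ) / (m k : ℂ))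

/-- The Vilenkin system `ψ n = ∏ k, (r k) ^ (n_k)`. -/
def psi (m : ℕ → ℕ) (n : ℕ) (x : G m) : ℂ :=
  ∏ k ∈ Finset.range (n + 1), rad m k x ^ digit m n k

/-- The Vilenkin-Dirichlet kernels `D n = ∑_{k<n} ψ k`. -/
def D (m : ℕ → ℕ) (n : ℕ) (x : G m) : ℂ := ∑ k ∈ Finset.range n, psi m k x

/-- The Cesàro numbers `A n α = (α+1)⋯(α+n)/n!`. -/
def A (α : ℝ) (n : ℕ) : ℝ := (∏ i ∈ Finset.range n, (α + (i + 1))) / (n.factorial : ℝ)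

/-- One-dimensional Vilenkin-Fourier coefficients. -/
def fhat1 (m : ℕ → ℕ) (μ : Measure (G m)) (f : G m → ℂ) (i : ℕ) : ℂ :=
  ∫ x, f x * (starRingEnd ℂ) (psi m i x) ∂μ

/-- One-dimensional `(C,-α)` Cesàro means of the Vilenkin-Fourier series. -/
def cesaro1 (m : ℕ → ℕ) (μ : Measure (G m)) (α : ℝ) (f : G m → ℂ) (n : ℕ) (x : G m) : ℂ :=
  ((A (-α) n : ℝ) : ℂ)⁻¹ *
    ∑ i ∈ Finset.range (n + 1), ((A (-α) (n - i) : ℝ) : ℂ) * fhat1 m μ f i * psi m i x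

/-- Double Vilenkin-Fourier coefficients. -/
def fhat2 (m : ℕ → ℕ) (μ : Measure (G m)) (f : G m × G m → ℂ) (i j : ℕ) : ℂ :=
  ∫ z, f z * (starRingEnd ℂ) (psi m i z.1) * (starRingEnd ℂ) (psi m j z.2) ∂(μ.prod μ)

/-- Rectangular partial sums of the double Vilenkin-Fourier series. -/
def partialSum2 (m : ℕ → ℕ) (μ : Measure (G m)) (f : G m × G m → ℂ) (n₁ n₂ : ℕ)
    (z : G m × G m) : ℂ :=
  ∑ k₁ ∈ Finset.range n₁, ∑ k₂ ∈ Finset.range n₂,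
    fhat2 m μ f k₁ k₂ * psi m k₁ z.1 * psi m k₂ z.2

/-- The `(C,-α,-β)` means of the double Vilenkin-Fourier series. -/
def cesaro2 (m : ℕ → ℕ) (μ : Measure (G m)) (α β : ℝ) (f : G m × G m → ℂ) (n₁ n₂ : ℕ)
    (z : G m × G m) : ℂ :=
  ((A (-α) n₁ * A (-β) n₂ : ℝ) : ℂ)⁻¹ *
    ∑ i ∈ Finset.range (n₁ + 1), ∑ j ∈ Finset.range (n₂ + 1),
      ((A (-α) (n₁ - i) * A (-β) (n₂ - j) : ℝ) : ℂ) * fhat2 m μ f i j * psi m i z.1 * psi m j z.2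

/-- One-dimensional modulus of continuity in `L^p`. -/
def omegaOne (m : ℕ → ℕ) (μ : Measure (G m)) (p : ℝ≥0∞) (f : G m → ℂ) (n : ℕ) : ℝ≥0∞ :=
  ⨆ u ∈ I m n, eLpNorm (fun x => f (x - u) - f x) p μ

/-- First partial modulus of continuity in `L^p`. -/
def omega1 (m : ℕ → ℕ) (μ : Measure (G m)) (p : ℝ≥0∞) (f : G m × G m → ℂ) (n : ℕ) : ℝ≥0∞ :=
  ⨆ u ∈ I m n, eLpNorm (fun z => f (z.1 - u, z.2) - f z) p (μ.prod μ)

/-- Second partial modulus of continuity in `L^p`. -/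
def omega2 (m : ℕ → ℕ) (μ : Measure (G m)) (p : ℝ≥0∞) (f : G m × G m → ℂ) (n : ℕ) : ℝ≥0∞ :=
  ⨆ v ∈ I m n, eLpNorm (fun z => f (z.1, z.2 - v) - f z) p (μ.prod μ)

/-- Mixed modulus of continuity in `L^p`. -/
def omega12 (m : ℕ → ℕ) (μ : Measure (G m)) (p : ℝ≥0∞) (f : G m × G m → ℂ) (n l : ℕ) : ℝ≥0∞ :=
  ⨆ u ∈ I m n, ⨆ v ∈ I m l,
    eLpNorm (fun z => f (z.1 - u, z.2 - v) - f (z.1 - u, z.2) - f (z.1, z.2 - v) + f z) p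
      (μ.prod μ)

/-- Total modulus of continuity in `L^p`. -/
def omegaT (m : ℕ → ℕ) (μ : Measure (G m)) (p : ℝ≥0∞) (f : G m × G m → ℂ) (n : ℕ) : ℝ≥0∞ :=
  ⨆ u ∈ I m n, ⨆ v ∈ I m n, eLpNorm (fun z => f (z.1 - u, z.2 - v) - f z) p (μ.prod μ)

/-- Total modulus of continuity in the uniform norm. -/
def omegaC (m : ℕ → ℕ) (f : G m × G m → ℂ) (n : ℕ) : ℝ≥0∞ :=
  ⨆ u ∈ I m n, ⨆ v ∈ I m n, ⨆ z : G m × G m, (‖f (z.1 - u, z.2 - v) - f z‖₊ : ℝ≥0∞)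


/-!
Write `D_k = ∑_{u<k} ψ_u` and, for `n < M_{K+1}`, cut `[0, k)` into the digit blocks
`[⌊k/M_{j+1}⌋ M_{j+1}, ⌊k/M_j⌋ M_j)`, `j ≤ K`. A digit block is a union of intervals
`[s M_j, (s+1) M_j)`, over each of which `∑ ψ_u = ψ_{s M_j} D_{M_j}` vanishes off `I_j`. Hence
`∑ a_k D_k = ∑_j g_j` with `g_j` supported on `I_j`, a set of measure `1/M_j`, so that
`‖g_j‖₁ ≤ M_j^{-1/2} ‖g_j‖₂`. By orthonormality of the `ψ_u`, `‖g_j‖₂²` is the sum of the squares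
of the coefficients of `g_j`; each coefficient is a sum of at most `M_{j+1}` of the `a_k`, and each
`a_k` enters at most `M_{j+1}` coefficients, so `‖g_j‖₂ ≤ M_{j+1} ‖a‖₂` and
`‖g_j‖₁ ≤ m_j M_j^{1/2} ‖a‖₂`. As `M_{j+1} ≥ 2 M_j`, the sum over `j ≤ K` is at most
`4 M_K^{1/2} ≤ 4 √n` times `sup m_k ‖a‖₂`.
-/

lemma _root_.Finset.sum_range_mul {β : Type*} [AddCommMonoid β] (f : ℕ → β) (a b : ℕ) :
    ∑ i ∈ range (a * b), f i = ∑ s ∈ range a, ∑ r ∈ range b, f (s * b + r) := by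
  induction a with
  | zero => simp
  | succ a ih => rw [add_mul, one_mul, sum_range_add, ih, sum_range_succ]

lemma _root_.geom_sum_eq_ite_of_pow_eq_one {K : Type*} [Field K] [DecidableEq K] {z : K} {q : ℕ}
    (hz : z ^ q = 1) : ∑ t ∈ range q, z ^ t = if z = 1 then (q : K) else 0 := by
  split_ifs with h
  · simp [h]
  · rw [geom_sum_eq h, hz, sub_self, zero_div]

lemma _root_.IsPrimitiveRoot.sum_pow_mul_conj_pow {ζ : ℂ} {q : ℕ} (hζ : IsPrimitiveRoot ζ q)
    {a b : ℕ} (ha : a < q) (hb : b < q) :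
    ∑ t ∈ range q, (ζ ^ a * starRingEnd ℂ (ζ ^ b)) ^ t = if a = b then (q : ℂ) else 0 := by
  have hconj : starRingEnd ℂ (ζ ^ b) = (ζ ^ b)⁻¹ := by
    rw [Complex.inv_eq_conj (by rw [norm_pow, hζ.norm'_eq_one (by omega), one_pow])]
  have hroot : (ζ ^ a * (ζ ^ b)⁻¹) ^ q = 1 := by
    rw [mul_pow, inv_pow, pow_right_comm, pow_right_comm ζ b, hζ.pow_eq_one, one_pow, one_pow,
      inv_one, one_mul]
  have hiff : ζ ^ a * (ζ ^ b)⁻¹ = 1 ↔ a = b :=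
    (mul_inv_eq_one₀ (pow_ne_zero _ (hζ.ne_zero (by omega)))).trans
      ⟨fun h => hζ.pow_inj ha hb h, fun h => h ▸ rfl⟩
  simp only [hconj, geom_sum_eq_ite_of_pow_eq_one hroot, hiff]

lemma _root_.ENNReal.ofReal_rpow_one_half {x : ℝ} (hx : 0 ≤ x) :
    ENNReal.ofReal x ^ (1 / 2 : ℝ) = ENNReal.ofReal √x := by
  rw [ENNReal.ofReal_rpow_of_nonneg hx (by norm_num), Real.sqrt_eq_rpow]

lemma _root_.MeasureTheory.eLpNorm_one_le_eLpNorm_two_mul_measure_rpow {α E : Type*}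
    [MeasurableSpace α] [NormedAddCommGroup E] {μ : Measure α} {f : α → E} {s : Set α}
    (hf : AEStronglyMeasurable f μ) (hfs : ∀ x ∉ s, f x = 0) :
    eLpNorm f 1 μ ≤ eLpNorm f 2 μ * μ s ^ (1 / 2 : ℝ) := by
  have hsupp : Function.support f ⊆ s := fun x hx => by_contra fun h => hx (hfs x h)
  calc eLpNorm f 1 μ = eLpNorm f 1 (μ.restrict s) :=
        (eLpNorm_restrict_eq_of_support_subset hsupp).symm
    _ ≤ eLpNorm f 2 (μ.restrict s) * μ.restrict s Set.univ ^ (1 / 2 : ℝ) := by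
        convert eLpNorm_le_eLpNorm_mul_rpow_measure_univ (by norm_num : (1 : ℝ≥0∞) ≤ 2)
          hf.restrict using 2
        norm_num
    _ = eLpNorm f 2 μ * μ s ^ (1 / 2 : ℝ) := by
        rw [eLpNorm_restrict_eq_of_support_subset hsupp, Measure.restrict_apply_univ]

lemma _root_.Finset.sum_mul_sum_eq_sum_filter_mul {ι κ R : Type*} [DecidableEq ι]
    [NonUnitalNonAssocSemiring R]
    (K : Finset κ) (U : Finset ι) (S : κ → Finset ι) (hS : ∀ k ∈ K, S k ⊆ U) (a : κ → R)
    (f : ι → R) :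
    ∑ k ∈ K, a k * ∑ u ∈ S k, f u = ∑ u ∈ U, (∑ k ∈ K with u ∈ S k, a k) * f u := by
  simp only [mul_sum, sum_mul]
  exact sum_comm' fun k u => by
    simp only [mem_filter]
    exact ⟨fun h => ⟨h, hS k h.1 h.2⟩, fun h => h.1⟩

lemma _root_.Finset.sum_sq_sum_filter_le {ι κ : Type*} [DecidableEq ι] (K : Finset κ) (U : Finset ι)
    (S : κ → Finset ι) (a : κ → ℝ) {L₁ L₂ : ℕ} (hS : ∀ k ∈ K, #(S k) ≤ L₁)
    (hU : ∀ u ∈ U, #{k ∈ K | u ∈ S k} ≤ L₂) :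
    ∑ u ∈ U, (∑ k ∈ K with u ∈ S k, a k) ^ 2 ≤ L₂ * L₁ * ∑ k ∈ K, a k ^ 2 := by
  calc ∑ u ∈ U, (∑ k ∈ K with u ∈ S k, a k) ^ 2
      ≤ ∑ u ∈ U, L₂ * ∑ k ∈ K with u ∈ S k, a k ^ 2 := sum_le_sum fun u hu =>
        sq_sum_le_card_mul_sum_sq.trans <| mul_le_mul_of_nonneg_right
          (by exact_mod_cast hU u hu) (sum_nonneg fun _ _ => sq_nonneg _)
    _ = L₂ * ∑ k ∈ K, #{u ∈ U | u ∈ S k} * a k ^ 2 := by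
        rw [← mul_sum]
        congr 1
        simp only [← nsmul_eq_mul, ← sum_const]
        exact sum_comm' fun u k => by simp only [mem_filter]; tauto
    _ ≤ L₂ * ∑ k ∈ K, L₁ * a k ^ 2 := by
        gcongr with k hk
        exact_mod_cast (card_le_card fun u hu => (mem_filter.1 hu).2).trans (hS k hk)
    _ = L₂ * L₁ * ∑ k ∈ K, a k ^ 2 := by simp only [mul_sum, mul_assoc]

section

variable {m : ℕ → ℕ}

lemma M_succ (k : ℕ) : M m (k + 1) = m k * M m k := rfl

lemma M_eq_prod (N : ℕ) : M m N = ∏ k ∈ range N, m k := by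
  induction N with
  | zero => rfl
  | succ N ih => rw [M_succ, ih, prod_range_succ, mul_comm]

lemma M_dvd_M {k t : ℕ} (h : k ≤ t) : M m k ∣ M m t := by
  induction t, h using Nat.le_induction with
  | base => rfl
  | succ t _ ih => exact ih.mul_left _

lemma digit_eq_zero_of_lt {u k : ℕ} (h : u < M m k) : digit m u k = 0 := by
  simp [digit, Nat.div_eq_of_lt h]

lemma mod_M_eq_sum_digit (N u : ℕ) : u % M m N = ∑ k ∈ range N, digit m u k * M m k := by
  induction N with
  | zero => simp [M, Nat.mod_one]
  | succ N ih =>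
    rw [M_succ, mul_comm, Nat.mod_mul, sum_range_succ, ← ih, digit, mul_comm (M m N)]

lemma eq_of_digit_eq {N u v : ℕ} (hu : u < M m N) (hv : v < M m N)
    (h : ∀ k < N, digit m u k = digit m v k) : u = v := by
  rw [← Nat.mod_eq_of_lt hu, ← Nat.mod_eq_of_lt hv, mod_M_eq_sum_digit, mod_M_eq_sum_digit]
  exact sum_congr rfl fun k hk => by rw [h k (mem_range.1 hk)]

lemma sum_mul_M_lt {N : ℕ} {c : ℕ → ℕ} (hc : ∀ k < N, c k < m k) :
    ∑ k ∈ range N, c k * M m k < M m N := by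
  induction N with
  | zero => simp [M]
  | succ N ih =>
    have h1 := ih fun k hk => hc k (by omega)
    have h2 : (c N + 1) * M m N ≤ m N * M m N := Nat.mul_le_mul_right _ (hc N (by omega))
    rw [sum_range_succ, M_succ]
    nlinarith

section Digits

variable (hm : ∀ k, 0 < m k)
include hm

lemma M_pos (k : ℕ) : 0 < M m k := by
  rw [M_eq_prod]
  exact prod_pos fun k _ => hm k

lemma M_le_M {k t : ℕ} (h : k ≤ t) : M m k ≤ M m t :=
  Nat.le_of_dvd (M_pos hm t) (M_dvd_M h)

lemma digit_lt (u k : ℕ) : digit m u k < m k :=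
  Nat.mod_lt _ (hm k)

lemma digit_mul_M_add_of_lt {k t : ℕ} (h : k < t) (s r : ℕ) :
    digit m (s * M m t + r) k = digit m r k := by
  obtain ⟨P, hP⟩ := M_dvd_M (m := m) (Nat.succ_le_of_lt h)
  rw [digit, digit, hP, M_succ, show s * (m k * M m k * P) + r = r + s * P * m k * M m k by ring,
    Nat.add_mul_div_right _ _ (M_pos hm k), Nat.add_mul_mod_self_right]

lemma digit_mul_M_of_lt {k t : ℕ} (h : k < t) (s : ℕ) : digit m (s * M m t) k = 0 := by
  simpa [digit] using digit_mul_M_add_of_lt hm h s 0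

lemma digit_mul_M_self (s t : ℕ) : digit m (s * M m t) t = s % m t := by
  rw [digit, Nat.mul_div_cancel _ (M_pos hm t)]

lemma digit_mul_M_add {t r : ℕ} (hr : r < M m t) (s k : ℕ) :
    digit m (s * M m t + r) k = digit m (s * M m t) k + digit m r k := by
  rcases lt_or_ge k t with h | h
  · rw [digit_mul_M_add_of_lt hm h, digit_mul_M_of_lt hm h, zero_add]
  · obtain ⟨P, hP⟩ := M_dvd_M (m := m) h
    have hdiv : (s * M m t + r) / M m t = s := by
      rw [add_comm, Nat.add_mul_div_right _ _ (M_pos hm t), Nat.div_eq_of_lt hr, zero_add]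
    rw [digit_eq_zero_of_lt (hr.trans_le (M_le_M hm h)), add_zero, digit, digit, hP,
      ← Nat.div_div_eq_div_mul, ← Nat.div_div_eq_div_mul, hdiv, Nat.mul_div_cancel _ (M_pos hm t)]

lemma digit_sum_mul_M {N : ℕ} {c : ℕ → ℕ} (hc : ∀ k < N, c k < m k) {j : ℕ} (hj : j < N) :
    digit m (∑ k ∈ range N, c k * M m k) j = c j := by
  induction N with
  | zero => omega
  | succ N ih =>
    have hlt := sum_mul_M_lt fun k (hk : k < N) => hc k (by omega)
    rw [sum_range_succ, add_comm, digit_mul_M_add hm hlt]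
    rcases lt_or_ge j N with h | h
    · rw [digit_mul_M_of_lt hm h, ih (fun k hk => hc k (by omega)) h, zero_add]
    · obtain rfl : j = N := by omega
      rw [digit_mul_M_self hm, Nat.mod_eq_of_lt (hc j hj), digit_eq_zero_of_lt hlt, add_zero]

end Digits

lemma lt_M (hm : ∀ k, 2 ≤ m k) (k : ℕ) : k < M m k := by
  induction k with
  | zero => exact Nat.one_pos
  | succ k ih =>
    rw [M_succ]
    nlinarith [hm k]

lemma sum_range_M_prod_digit (hm : ∀ k, 0 < m k) {β : Type*} [CommSemiring β] (N : ℕ)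
    (h : ℕ → ℕ → β) :
    ∑ u ∈ range (M m N), ∏ k ∈ range N, h k (digit m u k)
      = ∏ k ∈ range N, ∑ t ∈ range (m k), h k t := by
  induction N with
  | zero => simp [M]
  | succ N ih =>
    rw [M_succ, sum_range_mul, prod_range_succ, ← ih, mul_comm, sum_mul_sum]
    refine sum_congr rfl fun s hs => sum_congr rfl fun r hr => ?_
    rw [prod_range_succ, mul_comm, digit_mul_M_add hm (mem_range.1 hr), digit_mul_M_self hm,
      Nat.mod_eq_of_lt (mem_range.1 hs), digit_eq_zero_of_lt (mem_range.1 hr), add_zero]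
    congr 1
    exact prod_congr rfl fun k hk => by rw [digit_mul_M_add_of_lt hm (mem_range.1 hk)]

lemma rad_eq_pow (k : ℕ) (x : G m) :
    rad m k x = Complex.exp (2 * π * Complex.I / m k) ^ (x k).val := by
  rw [rad, ← Complex.exp_nat_mul]
  congr 1
  ring

section VilenkinSystem

variable (hm : ∀ k, 2 ≤ m k)
include hm

lemma psi_eq_prod {u N : ℕ} (hu : u < M m N) (x : G m) :
    psi m u x = ∏ k ∈ range N, rad m k x ^ digit m u k := by
  have hm0 : ∀ k, 0 < m k := fun k => two_pos.trans_le (hm k)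
  have extend : ∀ {N L : ℕ}, u < M m N → N ≤ L →
      ∏ k ∈ range L, rad m k x ^ digit m u k = ∏ k ∈ range N, rad m k x ^ digit m u k :=
    fun hN hNL => (prod_subset (range_subset_range.2 hNL) fun k _ hk => by
      rw [digit_eq_zero_of_lt (hN.trans_le (M_le_M hm0 (by simpa using hk))), pow_zero]).symm
  rw [psi, extend (lt_M hm u) (Nat.le_succ u), ← extend (lt_M hm u) (Nat.le_add_right u N),
    extend hu (Nat.le_add_left N u)]

lemma psi_mul_M_add {t r : ℕ} (hr : r < M m t) (s : ℕ) (x : G m) :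
    psi m (s * M m t + r) x = psi m (s * M m t) x * psi m r x := by
  have hm0 : ∀ k, 0 < m k := fun k => two_pos.trans_le (hm k)
  have hL : s * M m t + r < M m (s * M m t + r) := lt_M hm _
  rw [psi_eq_prod hm hL, psi_eq_prod hm (hL.trans_le' (Nat.le_add_right _ _)),
    psi_eq_prod hm (hL.trans_le' (Nat.le_add_left _ _)), ← prod_mul_distrib]
  exact prod_congr rfl fun k _ => by rw [digit_mul_M_add hm0 hr, pow_add]

lemma rad_ne_one {k : ℕ} {x : G m} (hx : x k ≠ 0) : rad m k x ≠ 1 := by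
  have hζ := Complex.isPrimitiveRoot_exp (m k) (by linarith [hm k])
  have : NeZero (m k) := ⟨by linarith [hm k]⟩
  rw [rad_eq_pow, Ne, hζ.pow_eq_one_iff_dvd]
  exact fun h => hx ((ZMod.val_eq_zero _).1 (Nat.eq_zero_of_dvd_of_lt h (ZMod.val_lt _)))

lemma rad_pow_m (k : ℕ) (x : G m) : rad m k x ^ m k = 1 := by
  have hζ := Complex.isPrimitiveRoot_exp (m k) (by linarith [hm k])
  rw [rad_eq_pow, pow_right_comm, hζ.pow_eq_one, one_pow]

lemma sum_psi_eq_zero {j : ℕ} {x : G m} (hx : x ∉ I m j) :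
    ∑ i ∈ range (M m j), psi m i x = 0 := by
  obtain ⟨k, hkj, hxk⟩ : ∃ k < j, x k ≠ 0 := by simpa [I] using hx
  rw [sum_congr rfl fun i hi => psi_eq_prod hm (mem_range.1 hi) x,
    sum_range_M_prod_digit (fun k => two_pos.trans_le (hm k)) j fun k t => rad m k x ^ t]
  refine prod_eq_zero (mem_range.2 hkj) ?_
  rw [geom_sum_eq_ite_of_pow_eq_one (rad_pow_m hm k x), if_neg (rad_ne_one hm hxk)]

lemma sum_range_mul_M_psi_eq_zero {j : ℕ} {x : G m} (hx : x ∉ I m j) (c : ℕ) :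
    ∑ u ∈ range (c * M m j), psi m u x = 0 := by
  rw [sum_range_mul]
  refine sum_eq_zero fun s _ => ?_
  rw [sum_congr rfl fun r hr => psi_mul_M_add hm (mem_range.1 hr) s x, ← mul_sum,
    sum_psi_eq_zero hm hx, mul_zero]

end VilenkinSystem

-- One point in each cylinder of rank `N`, as `w` ranges over `range (M m N)`.
def digitPoint (m : ℕ → ℕ) (w : ℕ) : G m := fun k => (digit m w k : ZMod (m k))

section Orthogonality

variable (hm : ∀ k, 2 ≤ m k)
include hm

lemma sum_psi_mul_conj_psi_digitPoint {N u v : ℕ} (hu : u < M m N) (hv : v < M m N) :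
    ∑ w ∈ range (M m N), psi m u (digitPoint m w) * starRingEnd ℂ (psi m v (digitPoint m w))
      = if u = v then (M m N : ℂ) else 0 := by
  have hm0 : ∀ k, 0 < m k := fun k => two_pos.trans_le (hm k)
  set ζ : ℕ → ℂ := fun k => Complex.exp (2 * π * Complex.I / m k)
  have hζ : ∀ k, IsPrimitiveRoot (ζ k) (m k) :=
    fun k => Complex.isPrimitiveRoot_exp _ (hm0 k).ne'
  have hrad : ∀ k w, rad m k (digitPoint m w) = ζ k ^ digit m w k := fun k w => by
    rw [rad_eq_pow, digitPoint, ZMod.val_cast_of_lt (digit_lt hm0 w k)]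
  calc _ = ∑ w ∈ range (M m N), ∏ k ∈ range N,
          (ζ k ^ digit m u k * starRingEnd ℂ (ζ k ^ digit m v k)) ^ digit m w k := by
        refine sum_congr rfl fun w _ => ?_
        rw [psi_eq_prod hm hu, psi_eq_prod hm hv, map_prod, ← prod_mul_distrib]
        refine prod_congr rfl fun k _ => ?_
        rw [hrad, mul_pow, ← map_pow, pow_right_comm (ζ k) (digit m u k),
          pow_right_comm (ζ k) (digit m v k)]
    _ = ∏ k ∈ range N, if digit m u k = digit m v k then (m k : ℂ) else 0 := by
        rw [sum_range_M_prod_digit hm0]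
        exact prod_congr rfl fun k _ =>
          (hζ k).sum_pow_mul_conj_pow (digit_lt hm0 u k) (digit_lt hm0 v k)
    _ = _ := by
        rw [prod_ite_zero, M_eq_prod, Nat.cast_prod]
        congr 1
        exact propext ⟨fun h => eq_of_digit_eq hu hv fun k hk => h k (mem_range.2 hk),
          fun h k _ => h ▸ rfl⟩

lemma sum_norm_sq_sum_psi_digitPoint (N : ℕ) (c : ℕ → ℂ) :
    ∑ w ∈ range (M m N), ‖∑ u ∈ range (M m N), c u * psi m u (digitPoint m w)‖ ^ 2
      = M m N * ∑ u ∈ range (M m N), ‖c u‖ ^ 2 := by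
  have expand : ∀ w, ((‖∑ u ∈ range (M m N), c u * psi m u (digitPoint m w)‖ ^ 2 : ℝ) : ℂ)
      = ∑ u ∈ range (M m N), ∑ v ∈ range (M m N), c u * starRingEnd ℂ (c v)
          * (psi m u (digitPoint m w) * starRingEnd ℂ (psi m v (digitPoint m w))) := fun w => by
    rw [Complex.ofReal_pow, ← Complex.mul_conj', map_sum, sum_mul_sum]
    refine sum_congr rfl fun u _ => sum_congr rfl fun v _ => ?_
    rw [map_mul]
    ring
  apply Complex.ofReal_injective
  calc _ = ∑ u ∈ range (M m N), ∑ v ∈ range (M m N), c u * starRingEnd ℂ (c v)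
          * ∑ w ∈ range (M m N),
              psi m u (digitPoint m w) * starRingEnd ℂ (psi m v (digitPoint m w)) := by
        rw [Complex.ofReal_sum, sum_congr rfl fun w _ => expand w, sum_comm]
        refine sum_congr rfl fun u _ => ?_
        rw [sum_comm]
        simp only [mul_sum]
    _ = ∑ u ∈ range (M m N), c u * starRingEnd ℂ (c u) * M m N := by
        refine sum_congr rfl fun u hu => ?_
        rw [sum_congr rfl fun v hv => by
          rw [sum_psi_mul_conj_psi_digitPoint hm (mem_range.1 hu) (mem_range.1 hv)]]
        simp only [mul_ite, mul_zero, sum_ite_eq, if_pos hu]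
    _ = _ := by
        push_cast
        rw [mul_sum]
        exact sum_congr rfl fun u _ => by rw [Complex.mul_conj']; ring

end Orthogonality

section Measure

variable {μ : Measure (G m)}

lemma measurableSet_cylinder (N : ℕ) (z : G m) :
    MeasurableSet {y : G m | ∀ k < N, y k = z k} := by
  simp only [Set.ofPred_forall]
  exact MeasurableSet.iInter fun k => MeasurableSet.iInter fun _ =>
    (MeasurableSet.of_discrete (s := {z k})).preimage (measurable_pi_apply k)

lemma measurable_psi (u : ℕ) : Measurable (psi m u) :=
  Finset.measurable_prod _ fun k _ =>
    ((Measurable.of_discrete (f := fun t : ZMod (m k) =>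
        Complex.exp (2 * π * Complex.I * (t.val : ℂ) / m k))).comp
      (measurable_pi_apply k)).pow_const _

lemma lintegral_eq_sum_digitPoint (hm : ∀ k, 0 < m k)
    (hμ : ∀ (n : ℕ) (x : G m), μ {y : G m | ∀ j < n, y j = x j} = (M m n : ℝ≥0∞)⁻¹)
    {N : ℕ} {f : G m → ℝ≥0∞} (hf : ∀ x y, (∀ k < N, x k = y k) → f x = f y) :
    ∫⁻ x, f x ∂μ = (M m N : ℝ≥0∞)⁻¹ * ∑ w ∈ range (M m N), f (digitPoint m w) := by
  have : ∀ k, NeZero (m k) := fun k => ⟨(hm k).ne'⟩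
  have hval_digit : ∀ w k, (digitPoint m w k).val = digit m w k := fun w k =>
    ZMod.val_cast_of_lt (digit_lt hm w k)
  have hpart : ∀ x, f x = ∑ w ∈ range (M m N),
      {y | ∀ k < N, y k = digitPoint m w k}.indicator (fun _ => f (digitPoint m w)) x := by
    intro x
    have hval : ∀ k ∈ range N, (x k).val < m k := fun k _ => ZMod.val_lt _
    set w₀ := ∑ k ∈ range N, (x k).val * M m k
    have hw₀ : w₀ < M m N := sum_mul_M_lt fun k hk => hval k (mem_range.2 hk)
    have hx : ∀ k < N, x k = digitPoint m w₀ k := fun k hk => by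
      rw [← ZMod.natCast_zmod_val (x k), digitPoint,
        digit_sum_mul_M hm (fun k hk => hval k (mem_range.2 hk)) hk]
    rw [sum_eq_single_of_mem w₀ (mem_range.2 hw₀), Set.indicator_of_mem (Set.mem_ofPred.2 hx),
      hf x _ hx]
    refine fun w hw hne => Set.indicator_of_notMem (fun hxw => hne ?_) _
    refine eq_of_digit_eq (mem_range.1 hw) hw₀ fun k hk => ?_
    rw [← hval_digit, ← hval_digit, ← hxw k hk, hx k hk]
  rw [lintegral_congr hpart, lintegral_finsetSum _ fun w _ =>
    measurable_const.indicator (measurableSet_cylinder N _), mul_sum]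
  refine sum_congr rfl fun w _ => ?_
  rw [lintegral_indicator_const (measurableSet_cylinder N _), hμ, mul_comm]

lemma psi_congr (hm : ∀ k, 2 ≤ m k) {u N : ℕ} (hu : u < M m N) {x y : G m}
    (h : ∀ k < N, x k = y k) : psi m u x = psi m u y := by
  rw [psi_eq_prod hm hu, psi_eq_prod hm hu]
  exact prod_congr rfl fun k hk => by rw [rad, rad, h k (mem_range.1 hk)]

lemma eLpNorm_two_sum_psi (hm : ∀ k, 2 ≤ m k)
    (hμ : ∀ (n : ℕ) (x : G m), μ {y : G m | ∀ j < n, y j = x j} = (M m n : ℝ≥0∞)⁻¹)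
    (N : ℕ) (c : ℕ → ℂ) :
    eLpNorm (fun x => ∑ u ∈ range (M m N), c u * psi m u x) 2 μ
      = ENNReal.ofReal √(∑ u ∈ range (M m N), ‖c u‖ ^ 2) := by
  have hM : (M m N : ℝ≥0∞) ≠ 0 := by exact_mod_cast (M_pos (fun k => two_pos.trans_le (hm k)) N).ne'
  have hcyl : ∀ x y : G m, (∀ k < N, x k = y k) →
      ∑ u ∈ range (M m N), c u * psi m u x = ∑ u ∈ range (M m N), c u * psi m u y :=
    fun x y hxy => sum_congr rfl fun u hu => by rw [psi_congr hm (mem_range.1 hu) hxy]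
  have henorm : ∀ z : ℂ, ‖z‖ₑ ^ (2 : ℝ) = ENNReal.ofReal (‖z‖ ^ 2) := fun z => by
    rw [← ofReal_norm, ENNReal.ofReal_rpow_of_nonneg (norm_nonneg _) zero_le_two,
      Real.rpow_two]
  rw [eLpNorm_eq_lintegral_rpow_enorm_toReal two_ne_zero ENNReal.ofNat_ne_top,
    ENNReal.toReal_ofNat, lintegral_eq_sum_digitPoint (fun k => two_pos.trans_le (hm k)) hμ
      (N := N) fun x y hxy => by rw [hcyl x y hxy],
    sum_congr rfl fun w _ => henorm _,
    ← ENNReal.ofReal_sum_of_nonneg fun w _ => sq_nonneg _, sum_norm_sq_sum_psi_digitPoint hm,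
    ENNReal.ofReal_mul (Nat.cast_nonneg _), ENNReal.ofReal_natCast, ← mul_assoc,
    ENNReal.inv_mul_cancel hM (ENNReal.natCast_ne_top _), one_mul,
    ENNReal.ofReal_rpow_one_half (sum_nonneg fun u _ => sq_nonneg _)]

end Measure

def truncDigits (m : ℕ → ℕ) (j k : ℕ) : ℕ := k / M m j * M m j

-- The `u < k` whose highest digit differing from that of `k` is the `j`-th one.
def digitBlock (m : ℕ → ℕ) (j k : ℕ) : Finset ℕ :=
  Ico (truncDigits m (j + 1) k) (truncDigits m j k)

lemma truncDigits_eq_succ_add (j k : ℕ) :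
    truncDigits m j k = truncDigits m (j + 1) k + digit m k j * M m j := by
  rw [truncDigits, truncDigits, digit, M_succ, mul_comm (m j), ← Nat.div_div_eq_div_mul]
  conv_lhs => rw [← Nat.div_add_mod (k / M m j) (m j)]
  ring

lemma truncDigits_succ_le (j k : ℕ) : truncDigits m (j + 1) k ≤ truncDigits m j k := by
  rw [truncDigits_eq_succ_add j k]
  exact Nat.le_add_right _ _

lemma sum_range_eq_sum_digitBlock {β : Type*} [AddCommGroup β] (f : ℕ → β) {J k : ℕ}
    (hk : k < M m J) :
    ∑ u ∈ range k, f u = ∑ j ∈ range J, ∑ u ∈ digitBlock m j k, f u := by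
  simp only [digitBlock, sum_Ico_eq_sub _ (truncDigits_succ_le _ _)]
  rw [sum_range_sub' fun j => ∑ u ∈ range (truncDigits m j k), f u]
  simp [truncDigits, M, Nat.div_eq_of_lt hk]

lemma sum_psi_digitBlock_eq_zero (hm : ∀ k, 2 ≤ m k) {j : ℕ} {x : G m} (hx : x ∉ I m j)
    (k : ℕ) : ∑ u ∈ digitBlock m j k, psi m u x = 0 := by
  have hsucc : truncDigits m (j + 1) k = k / M m (j + 1) * m j * M m j := by
    rw [truncDigits, M_succ, mul_assoc]
  rw [digitBlock, sum_Ico_eq_sub _ (truncDigits_succ_le j k), hsucc, truncDigits,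
    sum_range_mul_M_psi_eq_zero hm hx, sum_range_mul_M_psi_eq_zero hm hx, sub_zero]

section DigitBlockCard

variable (hm : ∀ k, 0 < m k)
include hm

lemma card_digitBlock_le (j k : ℕ) : #(digitBlock m j k) ≤ M m (j + 1) := by
  rw [digitBlock, Nat.card_Ico, truncDigits_eq_succ_add j k, Nat.add_sub_cancel_left, M_succ]
  exact Nat.mul_le_mul_right _ (digit_lt hm k j).le

lemma div_M_succ_eq_of_mem_digitBlock {j k u : ℕ} (hu : u ∈ digitBlock m j k) :
    u / M m (j + 1) = k / M m (j + 1) := by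
  rw [digitBlock, mem_Ico] at hu
  have hblock : digit m k j * M m j + M m j ≤ M m (j + 1) := by
    rw [M_succ, ← Nat.succ_mul]
    exact Nat.mul_le_mul_right _ (digit_lt hm k j)
  have := truncDigits_eq_succ_add (m := m) j k
  apply Nat.div_eq_of_lt_le hu.1
  rw [Nat.succ_mul]
  unfold truncDigits at *
  omega

lemma card_filter_mem_digitBlock_le (s : Finset ℕ) (j u : ℕ) :
    #{k ∈ s | u ∈ digitBlock m j k} ≤ M m (j + 1) := by
  calc #{k ∈ s | u ∈ digitBlock m j k}
      ≤ #(Ico (u / M m (j + 1) * M m (j + 1)) (u / M m (j + 1) * M m (j + 1) + M m (j + 1))) :=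
        card_le_card fun k hk => by
          rw [mem_Ico, div_M_succ_eq_of_mem_digitBlock hm (mem_filter.1 hk).2]
          exact ⟨Nat.div_mul_le_self _ _, Nat.lt_div_mul_add (M_pos hm _)⟩
    _ = M m (j + 1) := by simp

end DigitBlockCard

-- The function `g_j` of the sketch above.
def dirichletPiece (m : ℕ → ℕ) (a : ℕ → ℝ) (K : Finset ℕ) (j : ℕ) (x : G m) : ℂ :=
  ∑ k ∈ K, (a k : ℂ) * ∑ u ∈ digitBlock m j k, psi m u x

lemma digitBlock_subset_range (j k : ℕ) : digitBlock m j k ⊆ range k := fun _ hu =>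
  mem_range.2 <| (mem_Ico.1 hu).2.trans_le (Nat.div_mul_le_self _ _)

section DirichletPiece

variable {a : ℕ → ℝ} {K : Finset ℕ} {J : ℕ}

lemma sum_mul_D_eq_sum_dirichletPiece (hK : ∀ k ∈ K, k < M m J) (x : G m) :
    ∑ k ∈ K, (a k : ℂ) * D m k x = ∑ j ∈ range J, dirichletPiece m a K j x := by
  simp only [dirichletPiece, D]
  rw [sum_comm]
  exact sum_congr rfl fun k hk => by rw [sum_range_eq_sum_digitBlock _ (hK k hk), mul_sum]

lemma dirichletPiece_eq_sum_psi (hK : ∀ k ∈ K, k < M m J) (j : ℕ) :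
    dirichletPiece m a K j = fun x => ∑ u ∈ range (M m J),
      ((∑ k ∈ K with u ∈ digitBlock m j k, a k : ℝ) : ℂ) * psi m u x := by
  funext x
  rw [dirichletPiece, sum_mul_sum_eq_sum_filter_mul K (range (M m J)) (digitBlock m j)
    fun k hk => (digitBlock_subset_range j k).trans (range_subset_range.2 (hK k hk).le)]
  push_cast
  rfl

lemma measurable_dirichletPiece (j : ℕ) : Measurable (dirichletPiece m a K j) :=
  Finset.measurable_sum _ fun _ _ =>
    (Finset.measurable_sum _ fun u _ => measurable_psi u).const_mul _

lemma eLpNorm_dirichletPiece_le (hm : ∀ k, 2 ≤ m k) {μ : Measure (G m)}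
    (hμ : ∀ (n : ℕ) (x : G m), μ {y : G m | ∀ j < n, y j = x j} = (M m n : ℝ≥0∞)⁻¹)
    (hK : ∀ k ∈ K, k < M m J) (j : ℕ) :
    eLpNorm (dirichletPiece m a K j) 1 μ
      ≤ ENNReal.ofReal (m j * √(M m j) * √(∑ k ∈ K, a k ^ 2)) := by
  have hm0 : ∀ k, 0 < m k := fun k => two_pos.trans_le (hm k)
  have hMj : (0 : ℝ) < M m j := by exact_mod_cast M_pos hm0 j
  have hcoeff : ∑ u ∈ range (M m J), (∑ k ∈ K with u ∈ digitBlock m j k, a k) ^ 2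
      ≤ M m (j + 1) * M m (j + 1) * ∑ k ∈ K, a k ^ 2 :=
    sum_sq_sum_filter_le K _ (digitBlock m j) a (fun k _ => card_digitBlock_le hm0 j k)
      fun u _ => card_filter_mem_digitBlock_le hm0 K j u
  have hI : μ (I m j) = (M m j : ℝ≥0∞)⁻¹ := hμ j 0
  calc eLpNorm (dirichletPiece m a K j) 1 μ
      ≤ eLpNorm (dirichletPiece m a K j) 2 μ * μ (I m j) ^ (1 / 2 : ℝ) :=
        eLpNorm_one_le_eLpNorm_two_mul_measure_rpow
          (measurable_dirichletPiece j).aestronglyMeasurable fun x hx =>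
            sum_eq_zero fun k _ => by rw [sum_psi_digitBlock_eq_zero hm hx, mul_zero]
    _ = ENNReal.ofReal (√(∑ u ∈ range (M m J), (∑ k ∈ K with u ∈ digitBlock m j k, a k) ^ 2)
          * (√(M m j))⁻¹) := by
        rw [dirichletPiece_eq_sum_psi hK, eLpNorm_two_sum_psi hm hμ, hI,
          ← ENNReal.ofReal_natCast, ← ENNReal.ofReal_inv_of_pos hMj,
          ENNReal.ofReal_rpow_one_half (inv_nonneg.2 hMj.le), Real.sqrt_inv,
          ← ENNReal.ofReal_mul (Real.sqrt_nonneg _)]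
        simp only [Complex.norm_real, Real.norm_eq_abs, sq_abs]
    _ ≤ ENNReal.ofReal (m j * √(M m j) * √(∑ k ∈ K, a k ^ 2)) := by
        refine ENNReal.ofReal_le_ofReal ?_
        have hsqrt : √(M m j : ℝ) * √(M m j) = M m j := Real.mul_self_sqrt hMj.le
        calc _ ≤ √(M m (j + 1) * M m (j + 1) * ∑ k ∈ K, a k ^ 2) * (√(M m j))⁻¹ := by
              gcongr
          _ = m j * √(M m j) * √(∑ k ∈ K, a k ^ 2) := by
              rw [Real.sqrt_mul (by positivity), Real.sqrt_mul_self (by positivity), M_succ,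
                Nat.cast_mul]
              field_simp
              linear_combination (-(m j * √(∑ k ∈ K, a k ^ 2))) * hsqrt

end DirichletPiece

section Estimate

variable (hm : ∀ k, 2 ≤ m k)
include hm

lemma sum_sqrt_M_le (K : ℕ) : ∑ j ∈ range (K + 1), √(M m j : ℝ) ≤ 4 * √(M m K) := by
  induction K with
  | zero => simp [M]
  | succ K ih =>
    have hgrowth : 4 * √(M m K : ℝ) ≤ 3 * √(M m (K + 1)) := by
      have h2 : (2 : ℝ) * M m K ≤ M m (K + 1) := by
        rw [M_succ, Nat.cast_mul]
        gcongr
        exact_mod_cast hm K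
      nlinarith [Real.sq_sqrt (Nat.cast_nonneg (α := ℝ) (M m K)),
        Real.sq_sqrt (Nat.cast_nonneg (α := ℝ) (M m (K + 1))),
        Real.sqrt_nonneg (M m K : ℝ), Real.sqrt_nonneg (M m (K + 1) : ℝ)]
    rw [sum_range_succ]
    linarith

lemma exists_M_le_lt {n : ℕ} (hn : 1 ≤ n) : ∃ K, M m K ≤ n ∧ n < M m (K + 1) := by
  have hex : ∃ J, n < M m J := ⟨n, lt_M hm n⟩
  obtain ⟨K, hK⟩ : ∃ K, Nat.find hex = K + 1 :=
    Nat.exists_eq_add_one_of_ne_zero fun h => by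
      have := Nat.find_spec hex
      rw [h, M] at this
      omega
  exact ⟨K, not_lt.1 (Nat.find_min hex (hK ▸ K.lt_succ_self)), hK ▸ Nat.find_spec hex⟩

lemma eLpNorm_sum_mul_D_le {B : ℕ} (hB : ∀ k, m k ≤ B) {μ : Measure (G m)}
    (hμ : ∀ (n : ℕ) (x : G m), μ {y : G m | ∀ j < n, y j = x j} = (M m n : ℝ≥0∞)⁻¹)
    {n : ℕ} (hn : 1 ≤ n) (a : ℕ → ℝ) :
    eLpNorm (fun x => ∑ k ∈ Icc 1 n, (a k : ℂ) * D m k x) 1 μ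
      ≤ ENNReal.ofReal (4 * B * √n * √(∑ k ∈ Icc 1 n, a k ^ 2)) := by
  obtain ⟨K, hKn, hnK⟩ := exists_M_le_lt hm hn
  have hK : ∀ k ∈ Icc 1 n, k < M m (K + 1) := fun k hk => (mem_Icc.1 hk).2.trans_lt hnK
  set S := ∑ k ∈ Icc 1 n, a k ^ 2
  calc eLpNorm (fun x => ∑ k ∈ Icc 1 n, (a k : ℂ) * D m k x) 1 μ
      = eLpNorm (∑ j ∈ range (K + 1), dirichletPiece m a (Icc 1 n) j) 1 μ := by
        congr 1
        funext x
        rw [sum_mul_D_eq_sum_dirichletPiece hK, Finset.sum_apply]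
    _ ≤ ∑ j ∈ range (K + 1), eLpNorm (dirichletPiece m a (Icc 1 n) j) 1 μ :=
        eLpNorm_sum_le (fun j _ => (measurable_dirichletPiece j).aestronglyMeasurable) le_rfl
    _ ≤ ∑ j ∈ range (K + 1), ENNReal.ofReal (m j * √(M m j) * √S) :=
        sum_le_sum fun j _ => eLpNorm_dirichletPiece_le hm hμ hK j
    _ = ENNReal.ofReal (∑ j ∈ range (K + 1), m j * √(M m j) * √S) :=
        (ENNReal.ofReal_sum_of_nonneg fun j _ => by positivity).symm
    _ ≤ ENNReal.ofReal (4 * B * √n * √S) := by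
        refine ENNReal.ofReal_le_ofReal ?_
        calc ∑ j ∈ range (K + 1), m j * √(M m j) * √S
            ≤ ∑ j ∈ range (K + 1), B * √(M m j) * √S := by
              gcongr with j
              exact_mod_cast hB j
          _ = B * √S * ∑ j ∈ range (K + 1), √(M m j) := by 
              rw [mul_sum]
              exact sum_congr rfl fun j _ => by ring
          _ ≤ B * √S * (4 * √n) := by
              gcongr
              exact (sum_sqrt_M_le hm K).trans (by gcongr)
          _ = 4 * B * √n * √S := by ring

end Estimate

end

theorem statement_4_general (m : ℕ → ℕ) (hm2 : ∀ k, 2 ≤ m k) (hmbd : ∃ B, ∀ k, m k ≤ B)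
    (μ : Measure (G m))
    (hμ : ∀ (n : ℕ) (x : G m), μ {y : G m | ∀ j < n, y j = x j} = (M m n : ℝ≥0∞)⁻¹) :
    ∃ c : ℝ≥0, 0 < c ∧ ∀ n : ℕ, 1 ≤ n → ∀ a : ℕ → ℝ,
      (n : ℝ≥0∞)⁻¹ * ∫⁻ x, (‖(∑ k ∈ Finset.Icc 1 n, (a k : ℂ) * D m k x)‖₊ : ℝ≥0∞) ∂μ ≤
        (c : ℝ≥0∞) / (n : ℝ≥0∞) ^ ((1 : ℝ) / 2) *
          ENNReal.ofReal (∑ k ∈ Finset.Icc 1 n, (a k) ^ 2) ^ ((1 : ℝ) / 2) := by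
  obtain ⟨B, hB⟩ := hmbd
  refine ⟨4 * B, by have := (hm2 0).trans (hB 0); positivity, fun n hn a => ?_⟩
  set S := ∑ k ∈ Icc 1 n, a k ^ 2
  have hn0 : (0 : ℝ) < n := by exact_mod_cast hn
  calc (n : ℝ≥0∞)⁻¹ * ∫⁻ x, (‖(∑ k ∈ Icc 1 n, (a k : ℂ) * D m k x)‖₊ : ℝ≥0∞) ∂μ
      = (n : ℝ≥0∞)⁻¹ * eLpNorm (fun x => ∑ k ∈ Icc 1 n, (a k : ℂ) * D m k x) 1 μ := by
        rw [eLpNorm_one_eq_lintegral_enorm]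
        rfl
    _ ≤ (n : ℝ≥0∞)⁻¹ * ENNReal.ofReal (4 * B * √n * √S) :=
        mul_le_mul_right (eLpNorm_sum_mul_D_le hm2 hB hμ hn a) _
    _ = _ := by
        rw [← ENNReal.ofReal_natCast n, ENNReal.ofReal_rpow_one_half hn0.le,
          ENNReal.ofReal_rpow_one_half (sum_nonneg fun k _ => sq_nonneg _),
          ← ENNReal.ofReal_inv_of_pos hn0, ← ENNReal.ofReal_mul (inv_nonneg.2 hn0.le),
          show ((4 * B : ℝ≥0) : ℝ≥0∞) = ENNReal.ofReal (4 * B) by simp,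
          ← ENNReal.ofReal_div_of_pos (Real.sqrt_pos.2 hn0),
          ← ENNReal.ofReal_mul (by positivity)]
        congr 1
        field_simp
        rw [Real.sq_sqrt hn0.le]
        ring

theorem statement_4 (m : ℕ → ℕ) (hm2 : ∀ k, 2 ≤ m k) (hmbd : ∃ B, ∀ k, m k ≤ B)
    (μ : Measure (G m)) [IsProbabilityMeasure μ]
    (hμ : ∀ (n : ℕ) (x : G m), μ {y : G m | ∀ j < n, y j = x j} = (M m n : ℝ≥0∞)⁻¹) :
    ∃ c : ℝ≥0, 0 < c ∧ ∀ n : ℕ, 1 ≤ n → ∀ a : ℕ → ℝ,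
      (n : ℝ≥0∞)⁻¹ * ∫⁻ x, (‖(∑ k ∈ Finset.Icc 1 n, (a k : ℂ) * D m k x)‖₊ : ℝ≥0∞) ∂μ ≤
        (c : ℝ≥0∞) / (n : ℝ≥0∞) ^ ((1 : ℝ) / 2) *
          ENNReal.ofReal (∑ k ∈ Finset.Icc 1 n, (a k) ^ 2) ^ ((1 : ℝ) / 2) :=
  statement_4_general m hm2 hmbd μ hμ

end Vilenkin
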